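/- Let n ≥ 1, N = 2^n, and let x ∈ ℂ^N be a vector with polar decomposition x_i = r_i e^{iθ_i}, r_i ≥ 0, θ_i ∈ [0,2π), not all r_i zero. Set α_i = arccos(r_i / max_j r_j). Let ε > 0, and set t = 2n + ⌈log₂(2π/ε)⌉ and t' = n + 1 + ⌈log₂(2π/ε)⌉. Suppose α̃_i ∈ ℝ satisfy 0 ≤ α̃_i ≤ α_i and α_i − α̃_i < π/2^{t+1}, and θ̃_i ∈ ℝ satisfy |θ_i − θ̃_i| ≤ 2π/2^{t'}. Define x̃ ∈ ℂ^N by x̃_i = e^{iθ̃_i}·cos α̃_i / √(Σ_j cos² α̃_j). Then: (i) (1/2^n)·Σ_i cos² α̃_i ≥ ‖x‖²/(2^n · max_i r_i²), and (ii) ‖x/‖x‖ − x̃‖ ≤ ε. -/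

import Mathlib

/-!
Write `c_i = cos α_i = r_i / max_j r_j` and `c̃_i = cos α̃_i`. Since cosine decreases on `[0, π]`,
`c ≤ c̃` entrywise, which is (i). For (ii), both states have the form `e^{iφ} ⊙ u / ‖u‖` for a
real amplitude vector `u`: the target with `(θ, c)`, the prepared state with `(θ̃, c̃)`.
Replacing `c` by `c̃` moves the normalised vector by at most `2‖c - c̃‖ / ‖c‖ ≤ 2 √N π / 2^{t+1}`,
because `‖c‖ ≥ 1` (some `c_i` is `1`) and cosine is 1-Lipschitz; replacing the phases of a unit
vector moves it by at most `max_i |θ_i - θ̃_i| ≤ 2π / 2^{t'}`. With the chosen `t` and `t'` each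
of these two terms is at most `ε / 2^{n+1}`.
-/

/-- The largest entry `max_j x_j` of a vector `x : Fin (2^n) → ℝ`. -/
noncomputable def maxEntry (n : ℕ) (x : Fin (2 ^ n) → ℝ) : ℝ :=
  Finset.univ.sup' ⟨⟨0, Nat.two_pow_pos n⟩, Finset.mem_univ _⟩ x

open scoped Real

section Normalize

variable {V : Type*} [NormedAddCommGroup V] [NormedSpace ℝ V]

theorem norm_normalize_sub_normalize_le {x : V} (hx : x ≠ 0) (y : V) :
    ‖NormedSpace.normalize x - NormedSpace.normalize y‖ ≤ 2 * ‖x - y‖ / ‖x‖ := by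
  have hx' : 0 < ‖x‖ := norm_pos_iff.mpr hx
  rcases eq_or_ne y 0 with rfl | hy
  · simp [NormedSpace.norm_normalize_eq_one_iff.mpr hx, hx'.ne']
  have hy' : 0 < ‖y‖ := norm_pos_iff.mpr hy
  have hrescale : ‖‖x‖⁻¹ • y - NormedSpace.normalize y‖ ≤ ‖x - y‖ / ‖x‖ := by
    rw [NormedSpace.normalize, ← sub_smul, norm_smul, Real.norm_eq_abs]
    calc |‖x‖⁻¹ - ‖y‖⁻¹| * ‖y‖ = |(‖x‖⁻¹ - ‖y‖⁻¹) * ‖y‖| := by rw [abs_mul, abs_of_pos hy']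
      _ = |(‖y‖ - ‖x‖) / ‖x‖| := by congr 1; field_simp
      _ = |‖y‖ - ‖x‖| / ‖x‖ := by rw [abs_div, abs_of_pos hx']
      _ ≤ ‖x - y‖ / ‖x‖ := by
          gcongr
          rw [abs_sub_comm]
          exact abs_norm_sub_norm_le x y
  calc ‖NormedSpace.normalize x - NormedSpace.normalize y‖
      ≤ ‖NormedSpace.normalize x - ‖x‖⁻¹ • y‖ + ‖‖x‖⁻¹ • y - NormedSpace.normalize y‖ :=
        norm_sub_le_norm_sub_add_norm_sub _ _ _
    _ ≤ ‖x - y‖ / ‖x‖ + ‖x - y‖ / ‖x‖ := by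
        refine add_le_add (le_of_eq ?_) hrescale
        rw [NormedSpace.normalize, ← smul_sub, norm_smul, norm_inv, norm_norm, inv_mul_eq_div]
    _ = 2 * ‖x - y‖ / ‖x‖ := by ring

end Normalize

namespace EuclideanSpace

variable {ι 𝕜 𝕜' : Type*} [Fintype ι] [RCLike 𝕜] [RCLike 𝕜']

theorem norm_le_mul_norm_of_forall {f : EuclideanSpace 𝕜 ι} {g : EuclideanSpace 𝕜' ι} {c : ℝ}
    (hc : 0 ≤ c) (h : ∀ i, ‖f i‖ ≤ c * ‖g i‖) : ‖f‖ ≤ c * ‖g‖ := by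
  rw [norm_eq, norm_eq, ← Real.sqrt_sq hc, ← Real.sqrt_mul (sq_nonneg c), Finset.mul_sum]
  gcongr with i
  rw [← mul_pow]
  exact pow_le_pow_left₀ (norm_nonneg _) (h i) 2

theorem norm_le_sqrt_card_mul_of_forall {f : EuclideanSpace 𝕜 ι} {c : ℝ}
    (h : ∀ i, ‖f i‖ ≤ c) : ‖f‖ ≤ √(Fintype.card ι) * c := by
  rcases isEmpty_or_nonempty ι with hι | ⟨⟨i⟩⟩
  · simp [Subsingleton.elim f 0]
  calc ‖f‖ ≤ c * ‖(WithLp.toLp 2 fun _ => (1 : ℝ) : EuclideanSpace ℝ ι)‖ :=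
        norm_le_mul_norm_of_forall ((norm_nonneg _).trans (h i)) (by simpa using h)
    _ = √(Fintype.card ι) * c := by simp [norm_eq, mul_comm]

end EuclideanSpace

theorem Complex.norm_exp_ofReal_mul_I_sub_exp_ofReal_mul_I_le (a b : ℝ) :
    ‖Complex.exp (a * Complex.I) - Complex.exp (b * Complex.I)‖ ≤ |a - b| := by
  have h : Complex.exp (a * Complex.I) - Complex.exp (b * Complex.I) =
      Complex.exp (b * Complex.I) * (Complex.exp (Complex.I * (a - b : ℝ)) - 1) := by
    rw [mul_sub, mul_one, ← Complex.exp_add]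
    push_cast
    ring_nf
  rw [h, norm_mul, Complex.norm_exp_ofReal_mul_I, one_mul]
  exact Real.norm_exp_I_mul_ofReal_sub_one_le

noncomputable def phaseMul {ι : Type*} (φ : ι → ℝ) (u : EuclideanSpace ℝ ι) :
    EuclideanSpace ℂ ι :=
  WithLp.toLp 2 fun i => Complex.exp (φ i * Complex.I) * u i

section Phase

variable {ι : Type*} (φ : ι → ℝ)

@[simp]
theorem phaseMul_apply (u : EuclideanSpace ℝ ι) (i : ι) :
    phaseMul φ u i = Complex.exp (φ i * Complex.I) * u i := rfl

theorem phaseMul_sub (u v : EuclideanSpace ℝ ι) :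
    phaseMul φ u - phaseMul φ v = phaseMul φ (u - v) := by
  ext i
  simp [mul_sub]

variable [Fintype ι]

theorem norm_phaseMul (u : EuclideanSpace ℝ ι) : ‖phaseMul φ u‖ = ‖u‖ := by
  simp [EuclideanSpace.norm_eq, Complex.norm_exp_ofReal_mul_I]

theorem phaseMul_normalize_toLp_apply (f : ι → ℝ) (i : ι) :
    phaseMul φ (NormedSpace.normalize (WithLp.toLp 2 f : EuclideanSpace ℝ ι)) i =
      Complex.exp (φ i * Complex.I) * ((f i / √(∑ j, f j ^ 2) : ℝ) : ℂ) := by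
  simp [NormedSpace.normalize, EuclideanSpace.norm_eq, div_eq_inv_mul]

theorem norm_phaseMul_sub_phaseMul_le {ψ : ι → ℝ} {η : ℝ} (h : ∀ i, |φ i - ψ i| ≤ η)
    (u : EuclideanSpace ℝ ι) : ‖phaseMul φ u - phaseMul ψ u‖ ≤ η * ‖u‖ := by
  rcases isEmpty_or_nonempty ι with hι | ⟨⟨i⟩⟩
  · rw [Subsingleton.elim (phaseMul φ u - phaseMul ψ u) 0, Subsingleton.elim u 0]
    simp
  refine EuclideanSpace.norm_le_mul_norm_of_forall ((abs_nonneg _).trans (h i)) fun j => ?_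
  rw [WithLp.ofLp_sub, Pi.sub_apply, phaseMul_apply, phaseMul_apply, ← sub_mul, norm_mul,
    Complex.norm_real]
  gcongr
  exact (Complex.norm_exp_ofReal_mul_I_sub_exp_ofReal_mul_I_le _ _).trans (h j)

end Phase

theorem norm_phaseMul_normalize_sub_phaseMul_normalize_le {ι : Type*} [Fintype ι]
    {a b : EuclideanSpace ℝ ι} (ha : 1 ≤ ‖a‖) {φ ψ : ι → ℝ} {δ η : ℝ}
    (hab : ∀ i, |a i - b i| ≤ δ) (hφψ : ∀ i, |φ i - ψ i| ≤ η) :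
    ‖phaseMul φ (NormedSpace.normalize a) - phaseMul ψ (NormedSpace.normalize b)‖ ≤
      2 * √(Fintype.card ι) * δ + η := by
  have ha0 : a ≠ 0 := norm_pos_iff.mp (one_pos.trans_le ha)
  obtain ⟨i, -⟩ : ∃ i, a i ≠ 0 := Function.ne_iff.mp ((WithLp.ofLp_injective 2).ne ha0)
  have hη : 0 ≤ η := (abs_nonneg _).trans (hφψ i)
  have hb : ‖NormedSpace.normalize b‖ ≤ 1 := by
    rcases eq_or_ne b 0 with rfl | hb
    · simp [NormedSpace.normalize_zero_eq_zero]
    · exact (NormedSpace.norm_normalize_eq_one_iff.mpr hb).le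
  calc ‖phaseMul φ (NormedSpace.normalize a) - phaseMul ψ (NormedSpace.normalize b)‖
      ≤ ‖phaseMul φ (NormedSpace.normalize a) - phaseMul φ (NormedSpace.normalize b)‖ +
          ‖phaseMul φ (NormedSpace.normalize b) - phaseMul ψ (NormedSpace.normalize b)‖ :=
        norm_sub_le_norm_sub_add_norm_sub _ _ _
    _ ≤ 2 * ‖a - b‖ / ‖a‖ + η * 1 := by
        rw [phaseMul_sub, norm_phaseMul]
        gcongr
        · exact norm_normalize_sub_normalize_le ha0 b
        · exact (norm_phaseMul_sub_phaseMul_le φ hφψ _).trans (mul_le_mul_of_nonneg_left hb hη)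
    _ ≤ 2 * (√(Fintype.card ι) * δ) + η := by
        rw [mul_one]
        gcongr
        refine (div_le_self (by positivity) ha).trans ?_
        gcongr
        exact EuclideanSpace.norm_le_sqrt_card_mul_of_forall hab
    _ = 2 * √(Fintype.card ι) * δ + η := by ring

theorem sum_sq_div_sq_le_sum_sq {ι : Type*} [Fintype ι] {r c : ι → ℝ} {R : ℝ}
    (hr : ∀ i, 0 ≤ r i) (hR : 0 < R) (hc : ∀ i, r i / R ≤ c i) :
    (∑ i, r i ^ 2) / R ^ 2 ≤ ∑ i, c i ^ 2 := by
  rw [Finset.sum_div]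
  gcongr with i
  rw [← div_pow]
  exact pow_le_pow_left₀ (div_nonneg (hr i) hR.le) (hc i) 2

theorem Real.le_two_zpow_ceil_logb {y : ℝ} (hy : 0 ≤ y) : y ≤ 2 ^ ⌈Real.logb 2 y⌉ := by
  simpa [← Real.ceil_logb_natCast hy] using Int.self_le_zpow_clog (R := ℝ) one_lt_two y

theorem amplitude_and_phase_error_le (n : ℕ) {ε : ℝ} (hε : 0 < ε) {t t' : ℤ}
    (ht : t = 2 * n + ⌈Real.logb 2 (2 * π / ε)⌉)
    (ht' : t' = n + 1 + ⌈Real.logb 2 (2 * π / ε)⌉) :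
    2 * √(2 ^ n) * (π / 2 ^ (t + 1)) + 2 * π / 2 ^ t' ≤ ε := by
  set K := ⌈Real.logb 2 (2 * π / ε)⌉
  set P : ℝ := 2 ^ n
  set Q : ℝ := 2 ^ K
  have hP : 1 ≤ P := one_le_pow₀ one_le_two
  have hQ : 0 < Q := by positivity
  have hK : 2 * π ≤ ε * Q :=
    (div_le_iff₀' hε).mp (Real.le_two_zpow_ceil_logb (by positivity))
  have h2t : (2 : ℝ) ^ (t + 1) = P * P * Q * 2 := by
    rw [ht, zpow_add₀ two_ne_zero, zpow_add₀ two_ne_zero, two_mul, zpow_add₀ two_ne_zero,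
      zpow_natCast, zpow_one]
  have h2t' : (2 : ℝ) ^ t' = P * 2 * Q := by
    rw [ht', zpow_add₀ two_ne_zero, zpow_add₀ two_ne_zero, zpow_natCast, zpow_one]
  rw [h2t, h2t']
  calc 2 * √P * (π / (P * P * Q * 2)) + 2 * π / (P * 2 * Q)
      ≤ 2 * P * (π / (P * P * Q * 2)) + 2 * π / (P * 2 * Q) := by
        gcongr
        exact Real.sqrt_le_self_iff.mpr (Or.inr hP)
    _ = 2 * π / Q / P := by field_simp; ring
    _ ≤ ε := by
        rw [div_le_iff₀ (by positivity), div_le_iff₀ hQ]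
        nlinarith [mul_le_mul_of_nonneg_left hP (by positivity : 0 ≤ ε * Q)]

section MaxEntry

variable {n : ℕ}

theorem le_maxEntry (x : Fin (2 ^ n) → ℝ) (i : Fin (2 ^ n)) : x i ≤ maxEntry n x :=
  Finset.le_sup' x (Finset.mem_univ i)

theorem exists_eq_maxEntry (x : Fin (2 ^ n) → ℝ) : ∃ i, x i = maxEntry n x := by
  obtain ⟨i, -, hi⟩ := Finset.exists_mem_eq_sup' (⟨⟨0, Nat.two_pow_pos n⟩, Finset.mem_univ _⟩ :
    (Finset.univ : Finset (Fin (2 ^ n))).Nonempty) x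
  exact ⟨i, hi.symm⟩

theorem maxEntry_pos {r : Fin (2 ^ n) → ℝ} (hr : ∀ i, 0 ≤ r i) (hrne : r ≠ 0) :
    0 < maxEntry n r := by
  obtain ⟨i, hi⟩ := Function.ne_iff.mp hrne
  exact ((hr i).lt_of_ne' hi).trans_le (le_maxEntry r i)

theorem cos_arccos_div_maxEntry {r : Fin (2 ^ n) → ℝ} (hr : ∀ i, 0 ≤ r i)
    (hR : 0 < maxEntry n r) (i : Fin (2 ^ n)) :
    Real.cos (Real.arccos (r i / maxEntry n r)) = r i / maxEntry n r :=
  Real.cos_arccos (by linarith [div_nonneg (hr i) hR.le]) ((div_le_one hR).mpr (le_maxEntry r i))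

theorem one_le_norm_maxEntry_inv_smul {r : Fin (2 ^ n) → ℝ} (h : maxEntry n r ≠ 0) :
    1 ≤ ‖(maxEntry n r)⁻¹ • (WithLp.toLp 2 r : EuclideanSpace ℝ (Fin (2 ^ n)))‖ := by
  obtain ⟨i, hi⟩ := exists_eq_maxEntry r
  calc (1 : ℝ) = ‖((maxEntry n r)⁻¹ • (WithLp.toLp 2 r : EuclideanSpace ℝ (Fin (2 ^ n)))) i‖ := by
        simp [hi, h]
    _ ≤ _ := PiLp.norm_apply_le _ i

end MaxEntry

theorem probabilistic_preparation_complex_general (n : ℕ)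
    (x : Fin (2 ^ n) → ℂ)
    (r θ : Fin (2 ^ n) → ℝ) (hr : ∀ i, 0 ≤ r i) (hrne : r ≠ 0)
    (hx : ∀ i, x i = (r i : ℂ) * Complex.exp (θ i * Complex.I))
    (α : Fin (2 ^ n) → ℝ)
    (hα : ∀ i, α i = Real.arccos (r i / maxEntry n r))
    (ε : ℝ) (hε : 0 < ε) (t t' : ℤ)
    (ht : t = 2 * n + ⌈Real.logb 2 (2 * Real.pi / ε)⌉)
    (ht' : t' = n + 1 + ⌈Real.logb 2 (2 * Real.pi / ε)⌉)
    (αt : Fin (2 ^ n) → ℝ)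
    (hαt : ∀ i, 0 ≤ αt i ∧ αt i ≤ α i ∧
      α i - αt i < Real.pi / (2 : ℝ) ^ (t + 1))
    (θt : Fin (2 ^ n) → ℝ)
    (hθt : ∀ i, |θ i - θt i| ≤ 2 * Real.pi / (2 : ℝ) ^ t')
    (xt : Fin (2 ^ n) → ℂ)
    (hxt : ∀ i, xt i = Complex.exp (θt i * Complex.I) *
      ((Real.cos (αt i) / Real.sqrt (∑ j, Real.cos (αt j) ^ 2) : ℝ) : ℂ)) :
    (∑ i, r i ^ 2) / (2 ^ n * maxEntry n r ^ 2) ≤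
      (1 / 2 ^ n) * ∑ i, Real.cos (αt i) ^ 2 ∧
    Real.sqrt (∑ i, ‖
        (x i / (Real.sqrt (∑ j, r j ^ 2) : ℂ) - xt i)‖ ^ 2) ≤ ε := by
  set R := maxEntry n r
  have hR : 0 < R := maxEntry_pos hr hrne
  have hcos (i) : Real.cos (α i) = r i / R := hα i ▸ cos_arccos_div_maxEntry hr hR i
  have hle (i) : r i / R ≤ Real.cos (αt i) := hcos i ▸
    Real.cos_le_cos_of_nonneg_of_le_pi (hαt i).1 (hα i ▸ Real.arccos_le_pi _) (hαt i).2.1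
  refine ⟨?_, ?_⟩
  · rw [mul_comm, ← div_div, one_div_mul_eq_div]
    exact div_le_div_of_nonneg_right (sum_sq_div_sq_le_sum_sq hr hR hle) (by positivity)
  have hamp (i) : |r i / R - Real.cos (αt i)| ≤ π / 2 ^ (t + 1) := by
    rw [← hcos i]
    refine (Real.abs_cos_sub_cos_le _ _).trans ?_
    rw [abs_of_nonneg (sub_nonneg.mpr (hαt i).2.1)]
    exact (hαt i).2.2.le
  calc √(∑ i, ‖x i / (√(∑ j, r j ^ 2) : ℂ) - xt i‖ ^ 2)
      = ‖phaseMul θ (NormedSpace.normalize (R⁻¹ • (WithLp.toLp 2 r : EuclideanSpace ℝ _))) -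
          phaseMul θt (NormedSpace.normalize (WithLp.toLp 2 fun i => Real.cos (αt i)))‖ := by
        rw [NormedSpace.normalize_smul_of_pos (inv_pos.mpr hR), EuclideanSpace.norm_eq]
        congr! 3 with i
        rw [WithLp.ofLp_sub, Pi.sub_apply, phaseMul_normalize_toLp_apply,
          phaseMul_normalize_toLp_apply, hx, hxt]
        push_cast
        congr 2
        ring
    _ ≤ 2 * √(Fintype.card (Fin (2 ^ n))) * (π / 2 ^ (t + 1)) + 2 * π / 2 ^ t' :=
        norm_phaseMul_normalize_sub_phaseMul_normalize_le
          (one_le_norm_maxEntry_inv_smul hR.ne')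
          (fun i => by simpa [div_eq_inv_mul] using hamp i) hθt
    _ ≤ ε := by simpa using amplitude_and_phase_error_le n hε ht ht'

/-- Overall success probability and fidelity of the probabilistic
state-preparation algorithm for a complex vector `x` with polar decomposition
`x_i = r_i e^{iθ_i}`: with `t = 2n + ⌈log₂(2π/ε)⌉` bits for the amplitudes and
`t' = n + 1 + ⌈log₂(2π/ε)⌉` bits for the phases,
(i) the success probability `(1/2^n)Σ cos² α̃_i` is at least
`‖x‖²/(2^n·max_i r_i²)`, and (ii) the prepared vector
`x̃_i = e^{iθ̃_i} cos α̃_i / √(Σ_j cos² α̃_j)` satisfies `‖x/‖x‖ − x̃‖ ≤ ε`. -/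
theorem probabilistic_preparation_complex (n : ℕ) (hn : 1 ≤ n)
    (x : Fin (2 ^ n) → ℂ)
    (r θ : Fin (2 ^ n) → ℝ) (hr : ∀ i, 0 ≤ r i) (hrne : r ≠ 0)
    (hθr : ∀ i, θ i ∈ Set.Ico 0 (2 * Real.pi))
    (hx : ∀ i, x i = (r i : ℂ) * Complex.exp (θ i * Complex.I))
    (α : Fin (2 ^ n) → ℝ)
    (hα : ∀ i, α i = Real.arccos (r i / maxEntry n r))
    (ε : ℝ) (hε : 0 < ε) (t t' : ℤ)
    (ht : t = 2 * n + ⌈Real.logb 2 (2 * Real.pi / ε)⌉)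
    (ht' : t' = n + 1 + ⌈Real.logb 2 (2 * Real.pi / ε)⌉)
    (αt : Fin (2 ^ n) → ℝ)
    (hαt : ∀ i, 0 ≤ αt i ∧ αt i ≤ α i ∧
      α i - αt i < Real.pi / (2 : ℝ) ^ (t + 1))
    (θt : Fin (2 ^ n) → ℝ)
    (hθt : ∀ i, |θ i - θt i| ≤ 2 * Real.pi / (2 : ℝ) ^ t')
    (xt : Fin (2 ^ n) → ℂ)
    (hxt : ∀ i, xt i = Complex.exp (θt i * Complex.I) *
      ((Real.cos (αt i) / Real.sqrt (∑ j, Real.cos (αt j) ^ 2) : ℝ) : ℂ)) :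
    (∑ i, r i ^ 2) / (2 ^ n * maxEntry n r ^ 2) ≤
      (1 / 2 ^ n) * ∑ i, Real.cos (αt i) ^ 2 ∧
    Real.sqrt (∑ i, ‖
        (x i / (Real.sqrt (∑ j, r j ^ 2) : ℂ) - xt i)‖ ^ 2) ≤ ε :=
  probabilistic_preparation_complex_general n x r θ hr hrne hx α hα ε hε t t' ht ht' αt hαt θt hθt
    xt hxt
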